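/- arXiv:2010.13068 — 15 statements merged into one kernel-verified Lean document; each statement's English description precedes it below -/
import Mathlib

section
/- Let V be a real inner product space, let λ ∈ (0,1], let N be a positive integer, and let w^0, w^1, …, w^N ∈ V with w^0 = 0. Then Σ_{n=1}^N ⟨w^n, w^n − (1/2)λ w^{n-1}⟩ ≥ (1/2) Σ_{n=1}^N ‖w^n‖². -/
/-!
Cauchy–Schwarz and AM–GM bound each term below by `‖wⁿ‖² - (λ/4)(‖wⁿ‖² + ‖wⁿ⁻¹‖²)`.
Since `w⁰ = 0`, the shifted sum `∑ ‖wⁿ⁻¹‖²` is at most `∑ ‖wⁿ‖²`, so the total is at least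
`(1 - λ/2) ∑ ‖wⁿ‖² ≥ (1/2) ∑ ‖wⁿ‖²`.
-/

open Finset

theorem Finset.sum_Icc_one_sub_pred {G : Type*} [AddCommGroup G] (f : ℕ → G) (N : ℕ) :
    ∑ n ∈ Icc 1 N, (f n - f (n - 1)) = f N - f 0 := by
  induction N with
  | zero => simp
  | succ N ih =>
    rw [sum_Icc_succ_top (by omega), ih, Nat.add_sub_cancel]
    abel

theorem Finset.sum_Icc_one_pred_le {f : ℕ → ℝ} {N : ℕ} (h : f 0 ≤ f N) :
    ∑ n ∈ Icc 1 N, f (n - 1) ≤ ∑ n ∈ Icc 1 N, f n := by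
  have := sum_Icc_one_sub_pred f N
  rw [sum_sub_distrib] at this
  linarith

theorem norm_sq_sub_le_real_inner_sub_smul {V : Type*} [NormedAddCommGroup V]
    [InnerProductSpace ℝ V] (x y : V) (c : ℝ) :
    ‖x‖ ^ 2 - |c| / 2 * (‖x‖ ^ 2 + ‖y‖ ^ 2) ≤ inner ℝ x (x - c • y) := by
  rw [inner_sub_right, real_inner_smul_right, real_inner_self_eq_norm_sq]
  have h_cs : c * inner ℝ x y ≤ |c| * (‖x‖ * ‖y‖) :=
    (le_abs_self _).trans <| by
      rw [abs_mul]; exact mul_le_mul_of_nonneg_left (abs_real_inner_le_norm x y) (abs_nonneg c)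
  have h_amgm : ‖x‖ * ‖y‖ ≤ (‖x‖ ^ 2 + ‖y‖ ^ 2) / 2 := by nlinarith [sq_nonneg (‖x‖ - ‖y‖)]
  nlinarith [abs_nonneg c]

theorem stmt_1_general (V : Type*) [NormedAddCommGroup V] [InnerProductSpace ℝ V]
    (l : ℝ) (hl : l ∈ Set.Ioc (0 : ℝ) 1) (N : ℕ)
    (w : ℕ → V) (hw0 : w 0 = 0) :
    (1 / 2) * ∑ n ∈ Finset.Icc 1 N, ‖w n‖ ^ 2 ≤
      ∑ n ∈ Finset.Icc 1 N, (inner ℝ (w n) (w n - ((1 / 2) * l) • w (n - 1)) : ℝ) := by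
  obtain ⟨hl0, hl1⟩ := hl
  set S := ∑ n ∈ Icc 1 N, ‖w n‖ ^ 2
  have hS : 0 ≤ S := sum_nonneg fun n _ => by positivity
  have h_shift : ∑ n ∈ Icc 1 N, ‖w (n - 1)‖ ^ 2 ≤ S :=
    sum_Icc_one_pred_le (f := fun n => ‖w n‖ ^ 2) (by simp [hw0])
  have h_abs : |1 / 2 * l| / 2 = l / 4 := by rw [abs_of_nonneg (by positivity)]; ring
  calc 1 / 2 * S ≤ ∑ n ∈ Icc 1 N, (‖w n‖ ^ 2 - l / 4 * (‖w n‖ ^ 2 + ‖w (n - 1)‖ ^ 2)) := by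
        rw [sum_sub_distrib, ← mul_sum, sum_add_distrib]
        nlinarith
    _ ≤ _ := sum_le_sum fun n _ => h_abs ▸ norm_sq_sub_le_real_inner_sub_smul _ _ _

/-- Lemma 3.1, case k = 3,4: positivity property for the multiplier μ₁ = 1/2. -/
theorem stmt_1 (V : Type*) [NormedAddCommGroup V] [InnerProductSpace ℝ V]
    (l : ℝ) (hl : l ∈ Set.Ioc (0 : ℝ) 1) (N : ℕ) (hN : 0 < N)
    (w : ℕ → V) (hw0 : w 0 = 0) :
    (1 / 2) * ∑ n ∈ Finset.Icc 1 N, ‖w n‖ ^ 2 ≤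
      ∑ n ∈ Finset.Icc 1 N, (inner ℝ (w n) (w n - ((1 / 2) * l) • w (n - 1)) : ℝ) :=
  stmt_1_general V l hl N w hw0
end

section
/- Let V be a real inner product space, let λ ∈ (0,1], let N be a positive integer, and let w : ℤ → V satisfy w(n) = 0 for all n ≤ 0. Then Σ_{n=1}^N ⟨w(n), w(n) − λ w(n-1) + (1/4)λ² w(n-2)⟩ ≥ (1/4) Σ_{n=1}^N ‖w(n)‖². -/
/-!
With `l = λ`, `f n = ‖w n‖²` and `g n = ‖w n - (l/2) w (n-1)‖²`, completing squares bounds the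
`n`-th term from below by `3/8 f n + 1/2 g n - l²/8 f (n-1) - l²/2 g (n-1)`. Since `w` vanishes
for `n ≤ 0`, the shifted sums of `f` and `g` are at most the unshifted ones, and `l² ≤ 1` leaves
at least `(3/8 - 1/8) ∑ f n = 1/4 ∑ f n`.
-/

open Finset

lemma sum_Icc_one_comp_sub_one_add {M : Type*} [AddCommMonoid M] (h : ℤ → M) (N : ℕ) :
    ∑ n ∈ Icc (1 : ℤ) N, h (n - 1) + h N = h 0 + ∑ n ∈ Icc (1 : ℤ) N, h n := by
  induction N with
  | zero => simp
  | succ N ih =>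
    push_cast
    rw [← insert_Icc_right_eq_Icc_add_one (by omega), sum_insert (by simp), sum_insert (by simp),
      add_sub_cancel_right, add_comm (h N), add_assoc, ← add_assoc _ (h N), ih]
    abel

lemma sum_Icc_one_comp_sub_one_le {h : ℤ → ℝ} (h_nonneg : ∀ n, 0 ≤ h n) (h_zero : h 0 = 0)
    (N : ℕ) : ∑ n ∈ Icc (1 : ℤ) N, h (n - 1) ≤ ∑ n ∈ Icc (1 : ℤ) N, h n := by
  have := sum_Icc_one_comp_sub_one_add h N
  linarith [h_nonneg N]

section InnerProduct

variable {V : Type*} [NormedAddCommGroup V] [InnerProductSpace ℝ V]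

lemma inner_sub_smul_add_smul_eq (l : ℝ) (a b c : V) :
    inner ℝ a (a - l • b + ((1 / 4) * l ^ 2) • c) =
      3 / 8 * ‖a‖ ^ 2 + 1 / 2 * ‖a - (l / 2) • b‖ ^ 2 - l ^ 2 / 8 * ‖b‖ ^ 2
        - l ^ 2 / 2 * ‖b - (l / 2) • c‖ ^ 2
        + 1 / 2 * ‖(1 / 2 : ℝ) • a - l • (b - (l / 2) • c)‖ ^ 2 := by
  simp only [norm_sub_sq_real, inner_add_right, inner_sub_right,
    real_inner_smul_left, real_inner_smul_right, norm_smul, Real.norm_eq_abs, mul_pow, sq_abs,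
    real_inner_self_eq_norm_sq]
  ring

lemma le_inner_sub_smul_add_smul (l : ℝ) (a b c : V) :
    3 / 8 * ‖a‖ ^ 2 + 1 / 2 * ‖a - (l / 2) • b‖ ^ 2 - l ^ 2 / 8 * ‖b‖ ^ 2
        - l ^ 2 / 2 * ‖b - (l / 2) • c‖ ^ 2
      ≤ inner ℝ a (a - l • b + ((1 / 4) * l ^ 2) • c) := by
  rw [inner_sub_smul_add_smul_eq]
  exact le_add_of_nonneg_right (by positivity)

end InnerProduct

theorem stmt_2_general (V : Type*) [NormedAddCommGroup V] [InnerProductSpace ℝ V]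
    (l : ℝ) (hl : l ∈ Set.Ioc (0 : ℝ) 1) (N : ℕ)
    (w : ℤ → V) (hw0 : ∀ n : ℤ, n ≤ 0 → w n = 0) :
    (1 / 4) * ∑ n ∈ Finset.Icc (1 : ℤ) (N : ℤ), ‖w n‖ ^ 2 ≤
      ∑ n ∈ Finset.Icc (1 : ℤ) (N : ℤ),
        (inner ℝ (w n) (w n - l • w (n - 1) + ((1 / 4) * l ^ 2) • w (n - 2)) : ℝ) := by
  set f : ℤ → ℝ := fun n => ‖w n‖ ^ 2
  set g : ℤ → ℝ := fun n => ‖w n - (l / 2) • w (n - 1)‖ ^ 2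
  have hterm (n : ℤ) : 3 / 8 * f n + 1 / 2 * g n - l ^ 2 / 8 * f (n - 1) - l ^ 2 / 2 * g (n - 1)
      ≤ inner ℝ (w n) (w n - l • w (n - 1) + ((1 / 4) * l ^ 2) • w (n - 2)) := by
    simpa only [f, g, sub_sub, show (1 : ℤ) + 1 = 2 by norm_num]
      using le_inner_sub_smul_add_smul l (w n) (w (n - 1)) (w (n - 2))
  have hsum := sum_le_sum fun n (_ : n ∈ Icc (1 : ℤ) N) => hterm n
  simp only [sum_add_distrib, sum_sub_distrib, ← mul_sum] at hsum
  have hf := sum_Icc_one_comp_sub_one_le (h := f) (fun _ => sq_nonneg _) (by simp [f, hw0]) N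
  have hg := sum_Icc_one_comp_sub_one_le (h := g) (fun _ => sq_nonneg _) (by simp [g, hw0]) N
  have hl2 : l ^ 2 ≤ 1 := pow_le_one₀ hl.1.le hl.2
  have hF : 0 ≤ ∑ n ∈ Icc (1 : ℤ) N, f n := sum_nonneg fun n _ => sq_nonneg _
  have hG : 0 ≤ ∑ n ∈ Icc (1 : ℤ) N, g n := sum_nonneg fun n _ => sq_nonneg _
  linarith [mul_le_mul_of_nonneg_left hf (sq_nonneg l), mul_le_mul_of_nonneg_left hg (sq_nonneg l),
    mul_le_mul_of_nonneg_right hl2 hF, mul_le_mul_of_nonneg_right hl2 hG]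

/-- Lemma 3.1, case k = 5: positivity property for the multipliers (μ₁, μ₂) = (1, −1/4). -/
theorem stmt_2 (V : Type*) [NormedAddCommGroup V] [InnerProductSpace ℝ V]
    (l : ℝ) (hl : l ∈ Set.Ioc (0 : ℝ) 1) (N : ℕ) (hN : 0 < N)
    (w : ℤ → V) (hw0 : ∀ n : ℤ, n ≤ 0 → w n = 0) :
    (1 / 4) * ∑ n ∈ Finset.Icc (1 : ℤ) (N : ℤ), ‖w n‖ ^ 2 ≤
      ∑ n ∈ Finset.Icc (1 : ℤ) (N : ℤ),
        (inner ℝ (w n) (w n - l • w (n - 1) + ((1 / 4) * l ^ 2) • w (n - 2)) : ℝ) :=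
  stmt_2_general V l hl N w hw0
end

section
/- Let V be a real inner product space, let λ ∈ (0,1], let N be a positive integer, and let w : ℤ → V satisfy w(n) = 0 for all n ≤ 0. Then Σ_{n=1}^N ⟨w(n), w(n) − (43/30)λ w(n-1) + (2/3)λ² w(n-2) − (1/10)λ³ w(n-3)⟩ ≥ (1/24) Σ_{n=1}^N ‖w(n)‖². -/
/-!
For `λ = 1` the quadratic form is a Toeplitz form in the autocorrelations
`A d = ∑ n, ⟪u n, u (n - d)⟫` of a finitely supported sequence. It is nonnegative because it is
`∑ n, ‖c₀ u n + c₁ u (n - 1) + c₂ u (n - 2) + c₃ u (n - 3)‖²` plus a small multiple of `A 0`,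
which dominates the remaining error terms since `|A d| ≤ A 0`.

A general `λ ∈ [-1, 1]` reduces to `λ = 1` by a Schur product argument: the kernel `λ ^ |n - m|`
on `{1, …, N}` is a Gram kernel `∑ₖ gₖ(n) gₖ(m)`, so the `λ`-weighted form of `w` is the sum over
`k` of the unweighted forms of the sequences `gₖ • w`.
-/

open Function Finset
open scoped RealInnerProductSpace

/-- The coefficient of `εₖ` in `xₙ` for the recursion `x₁ = ε₁`, `xₙ = l xₙ₋₁ + √(1 - l²) εₙ`
driven by white noise `ε`; the covariance of `x` is `l ^ |n - m|`. -/
noncomputable def gramFactor (l : ℝ) (k n : ℤ) : ℝ :=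
  if n < k then 0 else (if k = 1 then 1 else √(1 - l ^ 2)) * l ^ (n - k).toNat

theorem gramFactor_succ (l : ℝ) {m : ℤ} (hm : 1 ≤ m) (k : ℤ) :
    gramFactor l k (m + 1) = l * gramFactor l k m + if k = m + 1 then √(1 - l ^ 2) else 0 := by
  rcases lt_trichotomy k (m + 1) with hk | rfl | hk
  · simp only [gramFactor, if_neg hk.not_gt, if_neg (show ¬m < k by omega), if_neg hk.ne,
      show (m + 1 - k).toNat = (m - k).toNat + 1 by omega, pow_succ]
    ring
  · simp [gramFactor, show m + 1 ≠ 1 by omega]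
  · simp [gramFactor, hk, hk.ne', show m < k by omega]

theorem sum_gramFactor_mul {l : ℝ} (hl : l ^ 2 ≤ 1) {N : ℕ} {m : ℤ} (hm : 1 ≤ m) (d : ℕ)
    (hmN : m + d ≤ N) :
    ∑ k ∈ Icc (1 : ℤ) N, gramFactor l k (m + d) * gramFactor l k m = l ^ d := by
  induction m, hm using Int.leInduction generalizing d with
  | base =>
    rw [sum_eq_single_of_mem 1 (by simp; omega)]
    · simp [gramFactor]
    · intro k hk hk1
      have : 1 < k := by rw [mem_Icc] at hk; omega
      simp [gramFactor, this]
  | succ m hm ih =>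
    have hs : √(1 - l ^ 2) ^ 2 = 1 - l ^ 2 := Real.sq_sqrt (by linarith)
    simp_rw [gramFactor_succ l hm, mul_add, mul_ite, mul_zero, sum_add_distrib, sum_ite_eq',
      mul_left_comm _ l, ← mul_sum]
    rw [show m + 1 + d = m + ↑(d + 1) by push_cast; ring, ih (d + 1) (by push_cast; omega),
      if_pos (by simp; omega)]
    rw [gramFactor, if_neg (by push_cast; omega), if_neg (by omega),
      show (m + ↑(d + 1) - (m + 1)).toNat = d by push_cast; omega]
    linear_combination l ^ d * hs

section Autocorrelation

variable {V : Type*} [NormedAddCommGroup V] [InnerProductSpace ℝ V]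

noncomputable def lagCorr (u : ℤ → V) (d : ℤ) : ℝ := ∑ᶠ n, ⟪u n, u (n - d)⟫

theorem finsum_inner_sub_sub (u : ℤ → V) (i j : ℤ) :
    ∑ᶠ n, ⟪u (n - i), u (n - j)⟫ = lagCorr u (j - i) := by
  rw [lagCorr, ← finsum_comp_equiv (Equiv.addRight i)]
  simp only [Equiv.coe_addRight, add_sub_cancel_right, sub_sub_eq_add_sub]

theorem lagCorr_neg (u : ℤ → V) (d : ℤ) : lagCorr u (-d) = lagCorr u d := by
  rw [← zero_sub, ← finsum_inner_sub_sub, lagCorr]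
  simp only [sub_zero, real_inner_comm]

theorem hasFiniteSupport_inner_comp_sub {u : ℤ → V} (hu : HasFiniteSupport u) (i j : ℤ) :
    HasFiniteSupport fun n ↦ ⟪u (n - i), u (n - j)⟫ :=
  Set.Finite.subset (hu.comp_of_injective (sub_left_injective (b := i))) fun n hn ↦ by
    contrapose! hn
    simp_all

theorem sum_sum_mul_lagCorr_nonneg {u : ℤ → V} (hu : HasFiniteSupport u) {ι : Type*} [Fintype ι]
    (c : ι → ℝ) (τ : ι → ℤ) :
    0 ≤ ∑ i, ∑ j, c i * c j * lagCorr u (τ j - τ i) := by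
  have hfin i j := hasFiniteSupport_inner_comp_sub hu (τ i) (τ j)
  calc 0 ≤ ∑ᶠ n, ⟪∑ i, c i • u (n - τ i), ∑ j, c j • u (n - τ j)⟫ :=
        finsum_nonneg fun _ ↦ real_inner_self_nonneg
    _ = ∑ i, ∑ᶠ n, ∑ j, c i * c j * ⟪u (n - τ i), u (n - τ j)⟫ := by
        simp_rw [sum_inner, inner_sum, real_inner_smul_left, real_inner_smul_right, ← mul_assoc]
        exact finsum_sum_comm _ _ fun i _ ↦ by fun_prop
    _ = _ := by
        refine sum_congr rfl fun i _ ↦ ?_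
        rw [finsum_sum_comm _ _ fun j _ ↦ by fun_prop]
        simp_rw [← mul_finsum, finsum_inner_sub_sub]

theorem abs_lagCorr_le {u : ℤ → V} (hu : HasFiniteSupport u) (d : ℤ) :
    |lagCorr u d| ≤ lagCorr u 0 := by
  have hsq (ε : ℝ) : 0 ≤ (1 + ε ^ 2) * lagCorr u 0 + 2 * ε * lagCorr u d := by
    have h := sum_sum_mul_lagCorr_nonneg hu ![1, ε] ![0, d]
    simp only [Fin.sum_univ_two, Matrix.cons_val_zero, Matrix.cons_val_one, sub_self, zero_sub,
      sub_zero, lagCorr_neg] at h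
    linarith
  rw [abs_le]
  constructor <;> linarith [hsq 1, hsq (-1)]

theorem bdf6_lagCorr_nonneg {u : ℤ → V} (hu : HasFiniteSupport u) :
    0 ≤ 23 / 24 * lagCorr u 0 - 43 / 30 * lagCorr u 1 + 2 / 3 * lagCorr u 2
      - 1 / 10 * lagCorr u 3 := by
  -- An approximate Fejér–Riesz factor of the symbol; the slack of about 0.004 in the coefficient
  -- of `lagCorr u 0` absorbs the rounding errors via `abs_lagCorr_le`.
  have hsos := sum_sum_mul_lagCorr_nonneg hu
    ![-10537 / 100000, 56156 / 100000, -63461 / 100000, 47451 / 100000] ![0, 1, 2, 3]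
  simp only [Fin.sum_univ_four, Matrix.cons_val_zero, Matrix.cons_val_one, Matrix.cons_val_two,
    Matrix.cons_val_three, Matrix.head_cons, Matrix.tail_cons] at hsos
  norm_num [lagCorr_neg] at hsos
  obtain ⟨h1, h1'⟩ := abs_le.mp (abs_lagCorr_le hu 1)
  obtain ⟨h2, h2'⟩ := abs_le.mp (abs_lagCorr_le hu 2)
  obtain ⟨h3, h3'⟩ := abs_le.mp (abs_lagCorr_le hu 3)
  linarith

noncomputable def lagSum (N : ℕ) (u : ℤ → V) (d : ℕ) : ℝ :=
  ∑ n ∈ Icc (1 : ℤ) N, ⟪u n, u (n - d)⟫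

theorem lagSum_eq_lagCorr_indicator {N : ℕ} {u : ℤ → V} (hu : ∀ n ≤ 0, u n = 0) (d : ℕ) :
    lagSum N u d = lagCorr ((Set.Icc (1 : ℤ) N).indicator u) d := by
  rw [lagCorr, finsum_eq_sum_of_support_subset (s := Icc (1 : ℤ) N)]
  · refine sum_congr rfl fun n hn ↦ ?_
    rw [mem_Icc] at hn
    by_cases hd : 1 ≤ n - d
    · simp [hn.1, hn.2, hd, show n - d ≤ N by omega]
    · simp [hn.1, hn.2, hd, hu (n - d) (by omega)]
  · refine support_subset_iff'.mpr fun n hn ↦ ?_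
    rw [coe_Icc] at hn
    rw [Set.indicator_of_notMem hn, inner_zero_left]

theorem bdf6_lagSum_nonneg (N : ℕ) {u : ℤ → V} (hu : ∀ n ≤ 0, u n = 0) :
    0 ≤ 23 / 24 * lagSum N u 0 - 43 / 30 * lagSum N u 1 + 2 / 3 * lagSum N u 2
      - 1 / 10 * lagSum N u 3 := by
  simp only [lagSum_eq_lagCorr_indicator hu]
  exact bdf6_lagCorr_nonneg ((Set.finite_Icc _ _).subset (Set.support_indicator_subset))

theorem pow_mul_lagSum_eq_sum_lagSum {l : ℝ} (hl : l ^ 2 ≤ 1) {N : ℕ} {w : ℤ → V}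
    (hw : ∀ n ≤ 0, w n = 0) (d : ℕ) :
    l ^ d * lagSum N w d = ∑ k ∈ Icc (1 : ℤ) N, lagSum N (fun n ↦ gramFactor l k n • w n) d := by
  simp only [lagSum, real_inner_smul_left, real_inner_smul_right, mul_sum]
  rw [sum_comm]
  refine sum_congr rfl fun n hn ↦ ?_
  rw [mem_Icc] at hn
  by_cases hd : 1 ≤ n - d
  · have h := sum_gramFactor_mul (N := N) hl hd d (by omega)
    rw [sub_add_cancel] at h
    rw [← h, sum_mul]
    exact sum_congr rfl fun k _ ↦ by ring
  · simp [hw (n - d) (by omega)]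

end Autocorrelation

theorem stmt_3_general (V : Type*) [NormedAddCommGroup V] [InnerProductSpace ℝ V]
    (l : ℝ) (hl : l ∈ Set.Ioc (0 : ℝ) 1) (N : ℕ)
    (w : ℤ → V) (hw0 : ∀ n : ℤ, n ≤ 0 → w n = 0) :
    (1 / 24) * ∑ n ∈ Finset.Icc (1 : ℤ) (N : ℤ), ‖w n‖ ^ 2 ≤
      ∑ n ∈ Finset.Icc (1 : ℤ) (N : ℤ),
        (inner ℝ (w n)
          (w n - ((43 / 30) * l) • w (n - 1) + ((2 / 3) * l ^ 2) • w (n - 2)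
            - ((1 / 10) * l ^ 3) • w (n - 3)) : ℝ) := by
  have hl2 : l ^ 2 ≤ 1 := by nlinarith [hl.1, hl.2]
  have hnorm : ∑ n ∈ Icc (1 : ℤ) N, ‖w n‖ ^ 2 = lagSum N w 0 := by
    simp [lagSum]
  have hexpand : ∑ n ∈ Icc (1 : ℤ) N, ⟪w n, w n - ((43 / 30) * l) • w (n - 1)
        + ((2 / 3) * l ^ 2) • w (n - 2) - ((1 / 10) * l ^ 3) • w (n - 3)⟫ =
      lagSum N w 0 - 43 / 30 * (l ^ 1 * lagSum N w 1) + 2 / 3 * (l ^ 2 * lagSum N w 2)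
        - 1 / 10 * (l ^ 3 * lagSum N w 3) := by
    simp only [lagSum, inner_sub_right, inner_add_right, real_inner_smul_right, sum_add_distrib,
      sum_sub_distrib, ← mul_sum, Nat.cast_zero, sub_zero, Nat.cast_one, Nat.cast_ofNat]
    ring
  have hsum := sum_nonneg fun k (_ : k ∈ Icc (1 : ℤ) N) ↦
    bdf6_lagSum_nonneg N (u := fun n ↦ gramFactor l k n • w n) fun n hn ↦ by simp [hw0 n hn]
  simp only [sum_add_distrib, sum_sub_distrib, ← mul_sum,
    ← pow_mul_lagSum_eq_sum_lagSum hl2 hw0, pow_zero, one_mul] at hsum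
  rw [hnorm, hexpand]
  linarith

/-- Lemma 3.1, case k = 6: positivity property for the multipliers
(μ₁, μ₂, μ₃) = (43/30, −2/3, 1/10). -/
theorem stmt_3 (V : Type*) [NormedAddCommGroup V] [InnerProductSpace ℝ V]
    (l : ℝ) (hl : l ∈ Set.Ioc (0 : ℝ) 1) (N : ℕ) (hN : 0 < N)
    (w : ℤ → V) (hw0 : ∀ n : ℤ, n ≤ 0 → w n = 0) :
    (1 / 24) * ∑ n ∈ Finset.Icc (1 : ℤ) (N : ℤ), ‖w n‖ ^ 2 ≤
      ∑ n ∈ Finset.Icc (1 : ℤ) (N : ℤ),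
        (inner ℝ (w n)
          (w n - ((43 / 30) * l) • w (n - 1) + ((2 / 3) * l ^ 2) • w (n - 2)
            - ((1 / 10) * l ^ 3) • w (n - 3)) : ℝ) :=
  stmt_3_general V l hl N w hw0
end

section
/- Let α ∈ (0,1). For every z ∈ ℂ with |z| ≤ 1, one has Re( (11/6 − 3z + (3/2)z² − (1/3)z³)^α / (1 − (1/2)z) ) ≥ 0, where w^α denotes the principal branch of the complex power. -/
/-!
Write `g(z) = 11/6 - 3z + (3/2)z² - (1/3)z³` and `μ(z) = 1 - z/2`. On the closed unit disc
`Re μ > 0` and `Re (g · conj μ) ≥ 0`, i.e. `|arg g - arg μ| ≤ π/2` with `|arg μ| < π/2`.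
Since `α arg g - arg μ = α (arg g - arg μ) - (1 - α) arg μ` is a convex combination of these
two angles, the argument `α arg g` of `g^α` also lies within `π/2` of `arg μ`, which is the
claim `Re (g^α / μ) ≥ 0`.
-/

open Complex ComplexConjugate Real

lemma Complex.re_mul_conj_eq_norm_mul_norm_mul_cos (u v : ℂ) :
    (u * conj v).re = ‖u‖ * ‖v‖ * Real.cos (arg u - arg v) := by
  rw [Real.cos_sub, mul_re, conj_re, conj_im, ← norm_mul_cos_arg u, ← norm_mul_sin_arg u,
    ← norm_mul_cos_arg v, ← norm_mul_sin_arg v]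
  ring

lemma Complex.abs_arg_sub_arg_le_pi_div_two {w m : ℂ} (hm : 0 < m.re)
    (hwm : 0 ≤ (w * conj m).re) : |arg w - arg m| ≤ π / 2 := by
  have hφ : |arg m| < π / 2 := abs_arg_lt_pi_div_two_iff.mpr (Or.inl hm)
  rcases eq_or_ne w 0 with rfl | hw
  · simpa using hφ.le
  have hcos : 0 ≤ Real.cos (arg w - arg m) := by
    rw [re_mul_conj_eq_norm_mul_norm_mul_cos] at hwm
    have hm0 : m ≠ 0 := fun h => by simp [h] at hm
    exact nonneg_of_mul_nonneg_right hwm (by positivity)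
  by_contra! h
  have hlt : |arg w - arg m| < π + π / 2 := by
    have := abs_arg_le_pi w
    rw [abs_lt] at hφ ⊢
    rw [abs_le] at this
    constructor <;> linarith
  have := Real.cos_neg_of_pi_div_two_lt_of_lt h hlt
  rw [Real.cos_abs] at this
  linarith

lemma Complex.re_cpow_ofReal_div_nonneg {w m : ℂ} {α : ℝ} (hα0 : 0 ≤ α) (hα1 : α ≤ 1)
    (hm : 0 < m.re) (hwm : 0 ≤ (w * conj m).re) : 0 ≤ (w ^ (α : ℂ) / m).re := by
  set θ := arg w
  set φ := arg m
  have hθφ := abs_le.mp (abs_arg_sub_arg_le_pi_div_two hm hwm)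
  have hφ := abs_lt.mp (abs_arg_lt_pi_div_two_iff.mpr (Or.inl hm))
  have hcos : 0 ≤ Real.cos (θ * α - φ) := by
    have hconvex : θ * α - φ = α * (θ - φ) - (1 - α) * φ := by ring
    apply Real.cos_nonneg_of_mem_Icc
    constructor <;> nlinarith
  have hre : (w ^ (α : ℂ) * conj m).re = ‖w‖ ^ α * ‖m‖ * Real.cos (θ * α - φ) := by
    rw [mul_re, conj_re, conj_im, cpow_ofReal_re, cpow_ofReal_im, Real.cos_sub,
      ← norm_mul_cos_arg m, ← norm_mul_sin_arg m]
    ring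
  have hdiv : (w ^ (α : ℂ) / m).re = (w ^ (α : ℂ) * conj m).re / normSq m := by
    rw [div_re, mul_re, conj_re, conj_im]
    ring
  rw [hdiv, hre]
  exact div_nonneg (mul_nonneg (by positivity) hcos) (normSq_nonneg m)

lemma bdf3_multiplier_re_pos {z : ℂ} (hz : ‖z‖ ≤ 1) : 0 < (1 - (1 / 2) * z).re := by
  have := (abs_le.mp ((abs_re_le_norm z).trans hz)).2
  simp only [sub_re, one_re, mul_re, div_ofNat_re, div_ofNat_im, one_im]
  linarith

lemma bdf3_re_mul_conj_multiplier_nonneg {z : ℂ} (hz : ‖z‖ ≤ 1) :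
    0 ≤ ((11 / 6 - 3 * z + (3 / 2) * z ^ 2 - (1 / 3) * z ^ 3) * conj (1 - (1 / 2) * z)).re := by
  have hdisc : z.re ^ 2 + z.im ^ 2 ≤ 1 := by
    have := (sq_le_one_iff₀ (norm_nonneg z)).mpr hz
    rwa [← normSq_eq_norm_sq, normSq_apply, ← sq, ← sq] at this
  have hexpand :
      ((11 / 6 - 3 * z + (3 / 2) * z ^ 2 - (1 / 3) * z ^ 3) * conj (1 - (1 / 2) * z)).re =
        11 / 6 - 47 / 12 * z.re + 3 * z.re ^ 2 - 13 / 12 * z.re ^ 3 + 1 / 6 * z.re ^ 4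
          + 1 / 4 * z.re * z.im ^ 2 - 1 / 6 * z.im ^ 4 := by
    simp only [pow_succ, pow_zero, one_mul, mul_re, mul_im, add_re, add_im, sub_re, sub_im,
      conj_re, conj_im, div_ofNat_re, div_ofNat_im, re_ofNat, im_ofNat, one_re, one_im]
    ring
  rw [hexpand]
  nlinarith [sq_nonneg (1 - z.re), mul_nonneg (sq_nonneg z.im) (sq_nonneg (1 - z.re)),
    sq_nonneg (1 - z.re ^ 2 - z.im ^ 2)]

/-- Lemma 4.1: A-stability of the pair (g, μ) for BDF3. -/
theorem stmt_4 (α : ℝ) (hα : α ∈ Set.Ioo (0 : ℝ) 1) (z : ℂ) (hz : ‖z‖ ≤ 1) :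
    0 ≤ (((11 / 6 - 3 * z + (3 / 2) * z ^ 2 - (1 / 3) * z ^ 3) ^ (α : ℂ)) /
          (1 - (1 / 2) * z)).re :=
  re_cpow_ofReal_div_nonneg hα.1.le hα.2.le (bdf3_multiplier_re_pos hz)
    (bdf3_re_mul_conj_multiplier_nonneg hz)
end

section
/- Let α ∈ (0,1). For every z ∈ ℂ with |z| ≤ 1, one has Re( (137/60 − 5z + 5z² − (10/3)z³ + (5/4)z⁴ − (1/5)z⁵)^α / (1 − (1/2)z)² ) ≥ 0, where w^α denotes the principal branch of the complex power. -/
/-!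
Write `g` for the BDF5 polynomial and `μ z = (1 - z / 2) ^ 2`. On the unit circle,
`Re (g z · conj (μ z))` is `(1 - x) q(x)` with `x = Re z` and `q` a positive quartic, so
`Re (g / μ) ≥ 0` there; as `μ` has no zero in the closed disc, the maximum modulus principle
applied to `exp (-g / μ)` extends this to the whole disc. Moreover `Re μ > 0` on the disc.
In terms of arguments, `Re (w / μ) ≥ 0` says that `arg w` lies in the interval
`[arg μ - π / 2, arg μ + π / 2]`, which also contains `0`; since `arg (g ^ α) = α · arg g` is a
convex combination of `0` and `arg g`, it lies in that interval too.
-/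

open Complex ComplexConjugate

lemma Real.cos_nonneg_iff_abs_le_pi_div_two {x : ℝ} (hx : |x| < 3 * Real.pi / 2) :
    0 ≤ Real.cos x ↔ |x| ≤ Real.pi / 2 := by
  refine ⟨fun hcos => ?_, fun hle => ?_⟩
  · by_contra! hlt
    have := Real.cos_neg_of_pi_div_two_lt_of_lt hlt (by linarith)
    rw [Real.cos_abs] at this
    linarith
  · rw [← Real.cos_abs]
    exact Real.cos_nonneg_of_neg_pi_div_two_le_of_le (by linarith [Real.pi_pos, abs_nonneg x]) hle

namespace Complex

lemma re_div_eq_norm_div_mul_cos_arg_sub (w : ℂ) {μ : ℂ} (hμ : μ ≠ 0) :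
    (w / μ).re = ‖w‖ / ‖μ‖ * Real.cos (arg w - arg μ) := by
  have hnorm : ‖μ‖ ≠ 0 := norm_ne_zero_iff.mpr hμ
  rw [div_re, normSq_eq_norm_sq, Real.cos_sub, ← norm_mul_cos_arg w, ← norm_mul_sin_arg w,
    ← norm_mul_cos_arg μ, ← norm_mul_sin_arg μ]
  field_simp

lemma re_div_nonneg_iff_abs_arg_sub_le {w μ : ℂ} (hμ : 0 < μ.re) :
    0 ≤ (w / μ).re ↔ |arg w - arg μ| ≤ Real.pi / 2 := by
  have hμarg : |arg μ| < Real.pi / 2 := abs_arg_lt_pi_div_two_iff.mpr (Or.inl hμ)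
  rcases eq_or_ne w 0 with rfl | hw
  · simpa using hμarg.le
  have hμ0 : μ ≠ 0 := fun h => by simp [h] at hμ
  have hfactor : 0 < ‖w‖ / ‖μ‖ := div_pos (norm_pos_iff.mpr hw) (norm_pos_iff.mpr hμ0)
  rw [re_div_eq_norm_div_mul_cos_arg_sub w hμ0, mul_nonneg_iff_of_pos_left hfactor]
  refine Real.cos_nonneg_iff_abs_le_pi_div_two ?_
  calc |arg w - arg μ| ≤ |arg w| + |arg μ| := abs_sub _ _
    _ < Real.pi + Real.pi / 2 := add_lt_add_of_le_of_lt (abs_arg_le_pi w) hμarg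
    _ = 3 * Real.pi / 2 := by ring

lemma arg_cpow_ofReal_of_mem_Icc (g : ℂ) {α : ℝ} (hα : α ∈ Set.Icc (0 : ℝ) 1) :
    arg (g ^ (α : ℂ)) = arg g * α := by
  rcases eq_or_ne g 0 with rfl | hg
  · rcases eq_or_ne α 0 with rfl | hα0
    · simp
    · simp [zero_cpow (ofReal_ne_zero.mpr hα0)]
  have hpolar : g ^ (α : ℂ) = ↑(‖g‖ ^ α) * (cos ↑(arg g * α) + sin ↑(arg g * α) * I) := by
    rw [← ofReal_cos, ← ofReal_sin]
    apply Complex.ext <;> simp [cpow_ofReal_re, cpow_ofReal_im, -ofReal_cos, -ofReal_sin]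
  rw [hpolar, arg_real_mul _ (Real.rpow_pos_of_pos (norm_pos_iff.mpr hg) α)]
  refine arg_cos_add_sin_mul_I ⟨?_, ?_⟩
  · rcases le_total 0 (arg g) with h | h
    · nlinarith [mul_nonneg h hα.1, Real.pi_pos]
    · nlinarith [mul_nonneg_of_nonpos_of_nonpos h (sub_nonpos.2 hα.2), neg_pi_lt_arg g]
  · rcases le_total 0 (arg g) with h | h
    · nlinarith [mul_nonneg h (sub_nonneg.2 hα.2), arg_le_pi g]
    · nlinarith [mul_nonpos_of_nonpos_of_nonneg h hα.1, Real.pi_pos]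

lemma re_cpow_div_nonneg {w μ : ℂ} (hμ : 0 < μ.re) (hw : 0 ≤ (w / μ).re) {α : ℝ}
    (hα : α ∈ Set.Icc (0 : ℝ) 1) : 0 ≤ (w ^ (α : ℂ) / μ).re := by
  have hα0 : 0 ≤ α := hα.1
  have hα1 : 0 ≤ 1 - α := sub_nonneg.mpr hα.2
  rw [re_div_nonneg_iff_abs_arg_sub_le hμ] at hw ⊢
  have hμarg : |arg μ| ≤ Real.pi / 2 := (abs_arg_lt_pi_div_two_iff.mpr (Or.inl hμ)).le
  rw [arg_cpow_ofReal_of_mem_Icc w hα]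
  calc |arg w * α - arg μ| = |α * (arg w - arg μ) + (1 - α) * -arg μ| := by ring_nf
    _ ≤ α * |arg w - arg μ| + (1 - α) * |arg μ| := by
        refine (abs_add_le _ _).trans_eq ?_
        rw [abs_mul, abs_mul, abs_neg, abs_of_nonneg hα0, abs_of_nonneg hα1]
    _ ≤ α * (Real.pi / 2) + (1 - α) * (Real.pi / 2) := by gcongr
    _ = Real.pi / 2 := by ring

lemma re_nonneg_of_forall_mem_frontier_re_nonneg {E : Type*} [NormedAddCommGroup E]
    [NormedSpace ℂ E] [Nontrivial E] {f : E → ℂ} {U : Set E} (hU : Bornology.IsBounded U)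
    (hf : DiffContOnCl ℂ f U) (hfrontier : ∀ z ∈ frontier U, 0 ≤ (f z).re) {z : E}
    (hz : z ∈ closure U) : 0 ≤ (f z).re := by
  have hexp : DiffContOnCl ℂ (fun w => exp (-f w)) U := ⟨hf.1.neg.cexp, hf.2.neg.cexp⟩
  have key := norm_le_of_forall_mem_frontier_norm_le hU hexp (C := 1)
    (fun w hw => by simpa [norm_exp] using hfrontier w hw) hz
  simpa [norm_exp] using key

end Complex

noncomputable def bdf5Poly (z : ℂ) : ℂ :=
  137 / 60 - 5 * z + 5 * z ^ 2 - (10 / 3) * z ^ 3 + (5 / 4) * z ^ 4 - (1 / 5) * z ^ 5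

noncomputable def bdf5Multiplier (z : ℂ) : ℂ := (1 - (1 / 2) * z) ^ 2

lemma bdf5Multiplier_re_pos {z : ℂ} (hz : ‖z‖ ≤ 1) : 0 < (bdf5Multiplier z).re := by
  have hdisc : z.re ^ 2 + z.im ^ 2 ≤ 1 := by
    nlinarith [sq_norm_sub_sq_re z, norm_nonneg z]
  have hre : (bdf5Multiplier z).re = 1 - z.re + z.re ^ 2 / 4 - z.im ^ 2 / 4 := by
    simp [bdf5Multiplier, sq]
    ring
  nlinarith [sq_nonneg (z.re - 1)]

lemma bdf5_boundary_quartic_pos (x : ℝ) :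
    0 < 23 / 30 - 7 / 10 * x + 92 / 15 * x ^ 2 - 42 / 5 * x ^ 3 + 16 / 5 * x ^ 4 := by
  nlinarith [sq_nonneg (x ^ 2 - 21 / 16 * x), sq_nonneg (x - 84 / 149)]

lemma bdf5Poly_mul_conj_re_nonneg {z : ℂ} (hz : ‖z‖ = 1) :
    0 ≤ (bdf5Poly z * conj (bdf5Multiplier z)).re := by
  set x := z.re
  set y := z.im
  have hcircle : x ^ 2 + y ^ 2 = 1 := by
    rw [← sq_norm_sub_sq_re z, hz]
    ring
  have hre : (bdf5Poly z * conj (bdf5Multiplier z)).re =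
      (1 - x) * (23 / 30 - 7 / 10 * x + 92 / 15 * x ^ 2 - 42 / 5 * x ^ 3 + 16 / 5 * x ^ 4)
        + (x ^ 2 + y ^ 2 - 1) *
          (-91 / 60 + 349 / 60 * x - 1261 / 240 * x ^ 2 + 13 / 15 * x ^ 3 + 41 / 80 * x ^ 4
            - 1 / 20 * x ^ 5 + (-227 / 240 + 31 / 15 * x - 6 / 5 * x ^ 2 + 1 / 10 * x ^ 3) * y ^ 2
            + (-9 / 80 + 3 / 20 * x) * y ^ 4) := by
    simp [bdf5Poly, bdf5Multiplier, pow_succ]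
    ring
  have hx : x ≤ 1 := by nlinarith [sq_nonneg y]
  rw [hre, hcircle, sub_self, zero_mul, add_zero]
  exact mul_nonneg (sub_nonneg.mpr hx) (bdf5_boundary_quartic_pos x).le

lemma bdf5Poly_div_bdf5Multiplier_re_nonneg {z : ℂ} (hz : ‖z‖ ≤ 1) :
    0 ≤ (bdf5Poly z / bdf5Multiplier z).re := by
  have hμ : ∀ w ∈ Metric.closedBall (0 : ℂ) 1, bdf5Multiplier w ≠ 0 := fun w hw hzero => by
    simpa [hzero] using bdf5Multiplier_re_pos (mem_closedBall_zero_iff.mp hw)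
  refine re_nonneg_of_forall_mem_frontier_re_nonneg (f := fun w => bdf5Poly w / bdf5Multiplier w)
    (Metric.isBounded_ball (x := 0) (r := 1)) ?_ (fun w hw => ?_) ?_
  · apply DifferentiableOn.diffContOnCl
    rw [closure_ball 0 one_ne_zero]
    exact DifferentiableOn.div (by unfold bdf5Poly; fun_prop) (by unfold bdf5Multiplier; fun_prop) hμ
  · rw [frontier_ball 0 one_ne_zero, mem_sphere_zero_iff_norm] at hw
    rw [div_re, ← add_div]
    exact div_nonneg (by simpa [mul_re] using bdf5Poly_mul_conj_re_nonneg hw) (normSq_nonneg _)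
  · rwa [closure_ball 0 one_ne_zero, mem_closedBall_zero_iff]

/-- Lemma 4.3: A-stability of the pair (g, μ) for BDF5. -/
theorem stmt_6 (α : ℝ) (hα : α ∈ Set.Ioo (0 : ℝ) 1) (z : ℂ) (hz : ‖z‖ ≤ 1) :
    0 ≤ (((137 / 60 - 5 * z + 5 * z ^ 2 - (10 / 3) * z ^ 3 + (5 / 4) * z ^ 4
            - (1 / 5) * z ^ 5) ^ (α : ℂ)) / (1 - (1 / 2) * z) ^ 2).re :=
  re_cpow_div_nonneg (bdf5Multiplier_re_pos hz) (bdf5Poly_div_bdf5Multiplier_re_nonneg hz)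
    (Set.Ioo_subset_Icc_self hα)
end

section
/- For every real number x and every λ ∈ (0,1], one has 3/4 − λ cos x + (1/4) λ² cos(2x) ≥ (1/2)(1 − λ cos x)². In particular, the trigonometric polynomial 3/4 − λ cos x + (1/4) λ² cos(2x) is nonnegative for all x. -/
theorem bdf5_symbol_sub_half_sq (x l : ℝ) :
    3 / 4 - l * Real.cos x + (1 / 4) * l ^ 2 * Real.cos (2 * x) - (1 / 2) * (1 - l * Real.cos x) ^ 2
      = (1 - l ^ 2) / 4 := by
  rw [Real.cos_two_mul]
  ring

/-- Core inequality of the positivity property (P) in Lemma 3.1, case k = 5. -/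
theorem stmt_8 (x : ℝ) (l : ℝ) (hl : l ∈ Set.Ioc (0 : ℝ) 1) :
    (1 / 2) * (1 - l * Real.cos x) ^ 2 ≤
      3 / 4 - l * Real.cos x + (1 / 4) * l ^ 2 * Real.cos (2 * x) := by
  have hl_sq : l ^ 2 ≤ 1 := pow_le_one₀ hl.1.le hl.2
  rw [← sub_nonneg, bdf5_symbol_sub_half_sq]
  linarith
end

section
/- For every real number x and every λ ∈ (0,1], one has 23/24 − (43/30) λ cos x + (2/3) λ² cos(2x) − (1/10) λ³ cos(3x) > 0. -/
/-! With `t = λ cos x`, the double- and triple-angle formulas turn the symbol into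
`p t + (1 - λ²) (2/3 - 3t/10)` for the cubic `p t = 7/24 - 17t/15 + 4t²/3 - 2t³/5`.
The second term is nonnegative for `|λ| ≤ 1`, and `p` is positive on `t ≤ 1`: its local minimum,
near `t ≈ 0.5725`, is only about `0.0048`, so positivity needs a sharp certificate. -/

open Real

/-- The symbol at `λ = ±1`, as a polynomial in `t = λ cos x`. -/
noncomputable def bdf6Cubic (t : ℝ) : ℝ := 7 / 24 - 17 / 15 * t + 4 / 3 * t ^ 2 - 2 / 5 * t ^ 3

theorem bdf6Cubic_pos {t : ℝ} (ht : t ≤ 1) : 0 < bdf6Cubic t := by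
  unfold bdf6Cubic
  -- the squares are centred near the local minimum of the cubic
  nlinarith [mul_nonneg (sq_nonneg (t - 229 / 400)) (sub_nonneg.2 ht),
    sq_nonneg (t - 21067 / 36800)]

theorem bdf6_symbol_eq (x l : ℝ) :
    23 / 24 - (43 / 30) * l * cos x + (2 / 3) * l ^ 2 * cos (2 * x)
        - (1 / 10) * l ^ 3 * cos (3 * x)
      = bdf6Cubic (l * cos x) + (1 - l ^ 2) * (2 / 3 - 3 / 10 * (l * cos x)) := by
  rw [cos_two_mul, cos_three_mul, bdf6Cubic]
  ring

theorem bdf6_symbol_pos (x : ℝ) {l : ℝ} (hl : |l| ≤ 1) :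
    0 < 23 / 24 - (43 / 30) * l * cos x + (2 / 3) * l ^ 2 * cos (2 * x)
        - (1 / 10) * l ^ 3 * cos (3 * x) := by
  have ht : |l * cos x| ≤ 1 := by
    rw [abs_mul]
    exact mul_le_one₀ hl (abs_nonneg _) (abs_cos_le_one x)
  have hl2 : l ^ 2 ≤ 1 := by nlinarith [sq_abs l, abs_nonneg l]
  rw [bdf6_symbol_eq]
  have hrest : 0 ≤ (1 - l ^ 2) * (2 / 3 - 3 / 10 * (l * cos x)) :=
    mul_nonneg (by linarith) (by linarith [le_abs_self (l * cos x)])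
  linarith [bdf6Cubic_pos (le_of_abs_le ht)]

/-- Core strict positivity of the positivity property (P) in Lemma 3.1, case k = 6. -/
theorem stmt_9 (x : ℝ) (l : ℝ) (hl : l ∈ Set.Ioc (0 : ℝ) 1) :
    0 < 23 / 24 - (43 / 30) * l * Real.cos x + (2 / 3) * l ^ 2 * Real.cos (2 * x)
          - (1 / 10) * l ^ 3 * Real.cos (3 * x) :=
  bdf6_symbol_pos x (abs_le.2 ⟨by linarith [hl.1], hl.2⟩)
end

section
/- For every ξ ∈ [−1, 1], the polynomial p(ξ) = −(2/5)ξ³ + (4/3)ξ² − (17/15)ξ + 7/24 is strictly positive; indeed p attains its minimum on [−1,1] at ξ* = (20 − √94)/18 and p(ξ*) > 0.004785 > 0. -/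
/-!
ξ* = (20 − √94)/18 is the smaller critical point of the cubic p = bdfSixCubic, so p − p(ξ*) has a double
root at ξ*; since the three roots sum to 10/3, the remaining root is c = (10 + √94)/9 > 1 and
p(ξ) − p(ξ*) = (2/5)(ξ − ξ*)²(c − ξ) ≥ 0 for ξ ≤ c. Finally p(ξ*) = 757/5832 − (47/3645)√94,
which exceeds 0.004785 because √94 < 9.69537.
-/

open Real Set

noncomputable section

lemma sqrt_pow_three {a : ℝ} (ha : 0 ≤ a) : √a ^ 3 = a * √a := by
  rw [pow_succ, sq_sqrt ha]

def bdfSixCubic (ξ : ℝ) : ℝ := -(2 / 5) * ξ ^ 3 + (4 / 3) * ξ ^ 2 - (17 / 15) * ξ + 7 / 24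

lemma bdfSixCubic_sub_bdfSixCubic_minimizer (ξ : ℝ) :
    bdfSixCubic ξ - bdfSixCubic ((20 - √94) / 18) =
      2 / 5 * (ξ - (20 - √94) / 18) ^ 2 * ((10 + √94) / 9 - ξ) := by
  unfold bdfSixCubic
  ring_nf
  simp only [sq_sqrt (by norm_num : (0 : ℝ) ≤ 94), sqrt_pow_three (by norm_num : (0 : ℝ) ≤ 94)]
  ring

lemma isMinOn_bdfSixCubic_Iic :
    IsMinOn bdfSixCubic (Iic ((10 + √94) / 9)) ((20 - √94) / 18) := fun ξ (hξ : ξ ≤ _) => by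
  show bdfSixCubic _ ≤ bdfSixCubic ξ
  rw [← sub_nonneg, bdfSixCubic_sub_bdfSixCubic_minimizer]
  have := sub_nonneg.2 hξ
  positivity

lemma bdfSixCubic_minimizer_eq :
    bdfSixCubic ((20 - √94) / 18) = 757 / 5832 - 47 / 3645 * √94 := by
  unfold bdfSixCubic
  ring_nf
  simp only [sqrt_pow_three (by norm_num : (0 : ℝ) ≤ 94)]
  ring

lemma lt_bdfSixCubic_minimizer : (0.004785 : ℝ) < bdfSixCubic ((20 - √94) / 18) := by
  have hs : √94 < 9.69537 := (sqrt_lt' (by norm_num)).2 (by norm_num)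
  rw [bdfSixCubic_minimizer_eq]
  norm_num
  linarith

/-- The cubic polynomial arising in the positivity proof for the six-step BDF
multipliers: it is strictly positive on [−1,1], attains its minimum there at
ξ* = (20 − √94)/18, and its minimal value exceeds 0.004785. -/
theorem stmt_10 :
    (∀ ξ ∈ Set.Icc (-1 : ℝ) 1,
        0 < -(2 / 5) * ξ ^ 3 + (4 / 3) * ξ ^ 2 - (17 / 15) * ξ + 7 / 24) ∧
    IsMinOn (fun ξ : ℝ => -(2 / 5) * ξ ^ 3 + (4 / 3) * ξ ^ 2 - (17 / 15) * ξ + 7 / 24)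
      (Set.Icc (-1 : ℝ) 1) ((20 - Real.sqrt 94) / 18) ∧
    (0.004785 : ℝ) <
      (fun ξ : ℝ => -(2 / 5) * ξ ^ 3 + (4 / 3) * ξ ^ 2 - (17 / 15) * ξ + 7 / 24)
        ((20 - Real.sqrt 94) / 18) := by
  have hIcc : Icc (-1 : ℝ) 1 ⊆ Iic ((10 + √94) / 9) := fun ξ hξ => by
    have := sqrt_nonneg 94
    exact hξ.2.trans (by linarith)
  have hmin : IsMinOn bdfSixCubic (Icc (-1) 1) ((20 - √94) / 18) :=
    isMinOn_bdfSixCubic_Iic.on_subset hIcc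
  exact ⟨fun ξ hξ => (by norm_num : (0 : ℝ) < 0.004785).trans
    (lt_bdfSixCubic_minimizer.trans_le (hmin hξ)), hmin, lt_bdfSixCubic_minimizer⟩

end
end

section
/- For every y ∈ [−1, 1], the polynomial h(y) = −88y³ + 262y² − 230y + 65 is strictly positive; indeed h attains its minimum on [−1,1] at y* = (131 − √1981)/132 and h(y*) > 2.02 > 0. -/
/-!
The point y* = (131 - √1981)/132 is the smaller root of h'(y) = -264y² + 524y - 230, and
h''(y*)/2 = 2√1981, so the Taylor expansion of the cubic h at y* reads
h(y) - h(y*) = (y - y*)² (2√1981 - 88 (y - y*)).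
For y ≤ 1 the second factor is nonnegative, so y* minimises h on (-∞, 1], and
h(y*) = (114641 - 1981√1981)/13068 > 2.02 because √1981 < 44.51.
-/

open Real Set

noncomputable section

namespace BDF3

def cubic (y : ℝ) : ℝ := -88 * y ^ 3 + 262 * y ^ 2 - 230 * y + 65

def criticalPoint : ℝ := (131 - √1981) / 132

lemma sq_sqrt_1981 : √1981 ^ 2 = 1981 := sq_sqrt (by norm_num)

lemma sqrt_1981_bounds : 44.5 < √1981 ∧ √1981 < 44.51 := by
  have := sq_sqrt_1981
  have := sqrt_nonneg 1981
  constructor <;> nlinarith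

lemma cubic_sub_cubic_criticalPoint (y : ℝ) :
    cubic y - cubic criticalPoint =
      (y - criticalPoint) ^ 2 * (2 * √1981 - 88 * (y - criticalPoint)) := by
  unfold cubic criticalPoint
  linear_combination (-(y - (131 - √1981) / 132) / 66) * sq_sqrt_1981

lemma cubic_criticalPoint : cubic criticalPoint = (114641 - 1981 * √1981) / 13068 := by
  unfold cubic criticalPoint
  linear_combination (√1981 / 26136) * sq_sqrt_1981

lemma lt_cubic_criticalPoint : (2.02 : ℝ) < cubic criticalPoint := by
  rw [cubic_criticalPoint]
  linarith [sqrt_1981_bounds.2]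

lemma isMinOn_cubic_Iic : IsMinOn cubic (Iic 1) criticalPoint := by
  intro y (hy : y ≤ 1)
  have hfactor : 0 ≤ 2 * √1981 - 88 * (y - criticalPoint) := by
    unfold criticalPoint
    linarith [sqrt_1981_bounds.1]
  exact sub_nonneg.mp (cubic_sub_cubic_criticalPoint y ▸ mul_nonneg (sq_nonneg _) hfactor)

end BDF3

end

/-- The cubic polynomial arising in the derivative estimate of Lemma 4.1 (BDF3):
it is strictly positive on [−1,1], attains its minimum there at
y* = (131 − √1981)/132, and its minimal value exceeds 2.02. -/
theorem stmt_11 :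
    (∀ y ∈ Set.Icc (-1 : ℝ) 1,
        0 < -88 * y ^ 3 + 262 * y ^ 2 - 230 * y + 65) ∧
    IsMinOn (fun y : ℝ => -88 * y ^ 3 + 262 * y ^ 2 - 230 * y + 65)
      (Set.Icc (-1 : ℝ) 1) ((131 - Real.sqrt 1981) / 132) ∧
    (2.02 : ℝ) <
      (fun y : ℝ => -88 * y ^ 3 + 262 * y ^ 2 - 230 * y + 65)
        ((131 - Real.sqrt 1981) / 132) := by
  have hmin : IsMinOn BDF3.cubic (Icc (-1) 1) BDF3.criticalPoint :=
    BDF3.isMinOn_cubic_Iic.on_subset Icc_subset_Iic_self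
  refine ⟨fun y hy => ?_, hmin, BDF3.lt_cubic_criticalPoint⟩
  have hle : BDF3.cubic BDF3.criticalPoint ≤ BDF3.cubic y := hmin hy
  show 0 < BDF3.cubic y
  linarith [BDF3.lt_cubic_criticalPoint]
end

section
/- For every x ∈ [0, π], one has (x − π)/2 + arctan( −(7 sin x − 2 sin(2x)) / (11 − 7 cos x + 2 cos(2x)) ) + arctan( ((1/2) sin x) / (1 − (1/2) cos x) ) ≥ −π/2. -/
open Real Set

/-!
Put `x = 2t` with `t ∈ [0, π/2]`, `s = sin t`, `c = cos t`. The first summand is `t - π/2`, and the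
two arctangent arguments become `A = -2sc(3 + 8s²)/(6 - 2s² + 16s⁴) ≤ 0` and `B = 2sc/(1 + 2s²) ≥ 0`.
Since `AB ≤ 0 < 1`, the addition formula gives `arctan A + arctan B = arctan W`, `W = (A + B)/(1 - AB)`,
and the claim `arctan (-W) ≤ t` amounts to `-W c ≤ s`. Clearing denominators and using `c² = 1 - s²`,
this is `4s(3 - 4s² + 16s⁴) ≥ 0`.
-/

lemma arctan_le_of_mul_cos_le_sin {t y : ℝ} (ht : t ∈ Ioc (-(π / 2)) (π / 2))
    (h : y * cos t ≤ sin t) : arctan y ≤ t := by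
  rcases ht.2.eq_or_lt with rfl | hlt
  · exact (arctan_lt_pi_div_two y).le
  · have hcos : 0 < cos t := cos_pos_of_mem_Ioo ⟨ht.1, hlt⟩
    rw [← arctan_tan ht.1 hlt, tan_eq_sin_div_cos]
    exact arctan_strictMono.monotone ((le_div_iff₀ hcos).2 h)

lemma quadratic_factor_tan_eq_half_angle (t : ℝ) :
    -(7 * sin (2 * t) - 2 * sin (2 * (2 * t))) / (11 - 7 * cos (2 * t) + 2 * cos (2 * (2 * t)))
      = -(2 * sin t * cos t * (3 + 8 * sin t ^ 2)) / (6 - 2 * sin t ^ 2 + 16 * sin t ^ 4) := by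
  have hc : cos t ^ 2 = 1 - sin t ^ 2 := by rw [cos_sq']
  congr 1
  · rw [sin_two_mul (2 * t), sin_two_mul, cos_two_mul, hc]; ring
  · rw [cos_two_mul (2 * t), cos_two_mul, hc]; ring

lemma geometric_factor_tan_eq_half_angle (t : ℝ) :
    1 / 2 * sin (2 * t) / (1 - 1 / 2 * cos (2 * t)) = 2 * sin t * cos t / (1 + 2 * sin t ^ 2) := by
  have hden : 1 - 1 / 2 * cos (2 * t) = (1 + 2 * sin t ^ 2) / 2 := by
    rw [cos_two_mul, cos_sq']; ring
  rw [hden, sin_two_mul]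
  field_simp

lemma neg_le_arctan_add_arctan_half_angle {t : ℝ} (ht0 : 0 ≤ t) (ht : t ≤ π / 2) :
    -t ≤ arctan (-(2 * sin t * cos t * (3 + 8 * sin t ^ 2)) / (6 - 2 * sin t ^ 2 + 16 * sin t ^ 4))
      + arctan (2 * sin t * cos t / (1 + 2 * sin t ^ 2)) := by
  set s := sin t
  set c := cos t
  have hs : 0 ≤ s := sin_nonneg_of_nonneg_of_le_pi ht0 (by linarith [pi_pos])
  have hc : 0 ≤ c := cos_nonneg_of_mem_Icc ⟨by linarith [pi_pos], ht⟩
  have hsc : s ^ 2 + c ^ 2 = 1 := sin_sq_add_cos_sq t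
  have hD : 0 < 6 - 2 * s ^ 2 + 16 * s ^ 4 := by nlinarith [sq_nonneg (4 * s ^ 2 - 1)]
  have hE : 0 < 1 + 2 * s ^ 2 := by positivity
  set A := -(2 * s * c * (3 + 8 * s ^ 2)) / (6 - 2 * s ^ 2 + 16 * s ^ 4) with hA
  set B := 2 * s * c / (1 + 2 * s ^ 2) with hB
  have hA0 : A ≤ 0 := div_nonpos_of_nonpos_of_nonneg (by simp only [neg_nonpos]; positivity) hD.le
  have hB0 : 0 ≤ B := by positivity
  have hAB : 0 < 1 - A * B := by nlinarith [mul_nonpos_of_nonpos_of_nonneg hA0 hB0]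
  have hdiff : s * (1 - A * B) + (A + B) * c
      = 4 * s * (3 - 4 * s ^ 2 + 16 * s ^ 4) / ((6 - 2 * s ^ 2 + 16 * s ^ 4) * (1 + 2 * s ^ 2)) := by
    rw [hA, hB]
    -- `field_simp` only clears the quartic denominator when it is an atom
    generalize hDdef : 6 - 2 * s ^ 2 + 16 * s ^ 4 = D at hD ⊢
    field_simp
    subst hDdef
    linear_combination (6 * s - 20 * s ^ 3 + 32 * s ^ 5) * hsc
  have key : -((A + B) / (1 - A * B)) * c ≤ s := by
    have hpos : 0 ≤ 4 * s * (3 - 4 * s ^ 2 + 16 * s ^ 4)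
        / ((6 - 2 * s ^ 2 + 16 * s ^ 4) * (1 + 2 * s ^ 2)) := by
      have : 0 ≤ 3 - 4 * s ^ 2 + 16 * s ^ 4 := by nlinarith [sq_nonneg (4 * s ^ 2 - 1)]
      positivity
    rw [neg_mul, neg_le, div_mul_eq_mul_div, le_div_iff₀ hAB]
    linarith
  have := arctan_le_of_mul_cos_le_sin ⟨by linarith [pi_pos], ht⟩ key
  rw [arctan_add (by linarith), ← neg_le]
  rwa [arctan_neg] at this

/-- Key angle estimate in the proof of Lemma 4.1 (A-stability of BDF3). -/
theorem stmt_12 (x : ℝ) (hx : x ∈ Set.Icc 0 Real.pi) :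
    -(Real.pi / 2) ≤
      (x - Real.pi) / 2
        + Real.arctan (-(7 * Real.sin x - 2 * Real.sin (2 * x)) /
            (11 - 7 * Real.cos x + 2 * Real.cos (2 * x)))
        + Real.arctan ((1 / 2) * Real.sin x / (1 - (1 / 2) * Real.cos x)) := by
  obtain ⟨t, rfl⟩ : ∃ t, x = 2 * t := ⟨x / 2, by ring⟩
  rw [quadratic_factor_tan_eq_half_angle, geometric_factor_tan_eq_half_angle]
  have := neg_le_arctan_add_arctan_half_angle (t := t) (by linarith [hx.1]) (by linarith [hx.2])
  linarith
end

section
/- For every x ∈ [0, π], one has (x − π)/2 + arctan( −(23 sin x − 13 sin(2x) + 3 sin(3x)) / (25 − 23 cos x + 13 cos(2x) − 3 cos(3x)) ) + arctan( ((1/2) sin x) / (1 − (1/2) cos x) ) ≥ −π/2. -/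
/-!
Put `A = x/2 + arctan (q/p)` with `p = 1 - cos x / 2 > 0`, `q = sin x / 2`, so that `A > -π/2`
and the claim reads `arctan (N/D) ≥ -A` for the numerator `N` and the denominator `D > 0`
of the middle term.
This is trivial when `A ≥ π/2`, and otherwise equivalent to `N cos A + D sin A ≥ 0`.
Rotating by `arctan (q/p)` multiplies by `(p + iq)/√(p² + q²)`, and in half angles
`p cos (x/2) - q sin (x/2) = cos (x/2) / 2`, `p sin (x/2) + q cos (x/2) = 3 sin (x/2) / 2`; hence
`N cos A + D sin A` is `sin (x/2) (8 - 18y + 46y² - 24y³) / √(p² + q²)` with `y = cos x`,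
and the cubic is positive for `y ≤ 1`.
-/

open Real

theorem neg_le_arctan_div {N D A : ℝ} (hD : 0 < D) (hA : -(π / 2) < A)
    (h : 0 ≤ N * cos A + D * sin A) : -A ≤ arctan (N / D) := by
  rcases le_or_gt (π / 2) A with hA' | hA'
  · linarith [neg_pi_div_two_lt_arctan (N / D)]
  have hcos : 0 < cos A := cos_pos_of_mem_Ioo ⟨hA, hA'⟩
  calc -A = arctan (tan (-A)) := (arctan_tan (by linarith) (by linarith)).symm
    _ ≤ arctan (N / D) := by
      refine arctan_strictMono.monotone ?_
      rw [tan_neg, tan_eq_sin_div_cos, ← neg_div, div_le_div_iff₀ hcos hD]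
      linarith

theorem sqrt_one_add_div_sq {p : ℝ} (hp : 0 < p) (q : ℝ) :
    √(1 + (q / p) ^ 2) = √(p ^ 2 + q ^ 2) / p := by
  rw [div_pow, one_add_div (by positivity), sqrt_div' _ (by positivity), sqrt_sq hp.le]

theorem cos_add_arctan_div {p : ℝ} (hp : 0 < p) (t q : ℝ) :
    cos (t + arctan (q / p)) = (p * cos t - q * sin t) / √(p ^ 2 + q ^ 2) := by
  rw [cos_add, cos_arctan, sin_arctan, sqrt_one_add_div_sq hp]
  field_simp

theorem sin_add_arctan_div {p : ℝ} (hp : 0 < p) (t q : ℝ) :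
    sin (t + arctan (q / p)) = (p * sin t + q * cos t) / √(p ^ 2 + q ^ 2) := by
  rw [sin_add, cos_arctan, sin_arctan, sqrt_one_add_div_sq hp]
  field_simp

theorem neg_add_arctan_div_le_arctan_div {N D p q t : ℝ} (hD : 0 < D) (hp : 0 < p)
    (hA : -(π / 2) < t + arctan (q / p))
    (h : 0 ≤ N * (p * cos t - q * sin t) + D * (p * sin t + q * cos t)) :
    -(t + arctan (q / p)) ≤ arctan (N / D) := by
  refine neg_le_arctan_div hD hA ?_
  rw [cos_add_arctan_div hp, sin_add_arctan_div hp, mul_div_assoc', mul_div_assoc', ← add_div]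
  exact div_nonneg h (sqrt_nonneg _)

/-- `bdf4Re x + i bdf4Im x = 25 - 23 e^{ix} + 13 e^{2ix} - 3 e^{3ix}`. -/
noncomputable def bdf4Re (x : ℝ) : ℝ := 25 - 23 * cos x + 13 * cos (2 * x) - 3 * cos (3 * x)

noncomputable def bdf4Im (x : ℝ) : ℝ := -(23 * sin x - 13 * sin (2 * x) + 3 * sin (3 * x))

theorem bdf4Re_eq (x : ℝ) : bdf4Re x = 12 - 14 * cos x + 26 * cos x ^ 2 - 12 * cos x ^ 3 := by
  rw [bdf4Re, cos_two_mul, cos_three_mul]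
  ring

theorem bdf4Im_eq (x : ℝ) : bdf4Im x = -sin x * (20 - 26 * cos x + 12 * cos x ^ 2) := by
  rw [bdf4Im, sin_two_mul, sin_three_mul]
  linear_combination (12 * sin x) * sin_sq_add_cos_sq x

theorem bdf4Re_pos (x : ℝ) : 0 < bdf4Re x := by
  rw [bdf4Re_eq]
  nlinarith [mul_nonneg (sub_nonneg.2 (cos_le_one x)) (sq_nonneg (cos x - 1 / 3)),
    sq_nonneg (cos x)]

theorem bdf4_cross_eq (x : ℝ) :
    bdf4Im x * ((1 - 1 / 2 * cos x) * cos (x / 2) - 1 / 2 * sin x * sin (x / 2))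
      + bdf4Re x * ((1 - 1 / 2 * cos x) * sin (x / 2) + 1 / 2 * sin x * cos (x / 2))
      = sin (x / 2) * (8 - 18 * cos x + 46 * cos x ^ 2 - 24 * cos x ^ 3) := by
  have hsin_two : sin x = 2 * sin (x / 2) * cos (x / 2) := by
    rw [← sin_two_mul, mul_div_cancel₀ x two_ne_zero]
  have hcos_sq : cos (x / 2) ^ 2 = (1 + cos x) / 2 := by
    rw [cos_sq, mul_div_cancel₀ x two_ne_zero]; ring
  have hsin_sq : sin (x / 2) ^ 2 = (1 - cos x) / 2 := by
    rw [sin_sq, hcos_sq]; ring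
  have hcos_rot :
      (1 - 1 / 2 * cos x) * cos (x / 2) - 1 / 2 * sin x * sin (x / 2) = cos (x / 2) / 2 := by
    rw [hsin_two]; linear_combination (-cos (x / 2)) * hsin_sq
  have hsin_rot :
      (1 - 1 / 2 * cos x) * sin (x / 2) + 1 / 2 * sin x * cos (x / 2) = 3 / 2 * sin (x / 2) := by
    rw [hsin_two]; linear_combination sin (x / 2) * hcos_sq
  rw [hcos_rot, hsin_rot, bdf4Im_eq, bdf4Re_eq, hsin_two]
  linear_combination (-sin (x / 2) * (20 - 26 * cos x + 12 * cos x ^ 2)) * hcos_sq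

theorem bdf4_cross_nonneg {x : ℝ} (hx : 0 ≤ sin (x / 2)) :
    0 ≤ bdf4Im x * ((1 - 1 / 2 * cos x) * cos (x / 2) - 1 / 2 * sin x * sin (x / 2))
      + bdf4Re x * ((1 - 1 / 2 * cos x) * sin (x / 2) + 1 / 2 * sin x * cos (x / 2)) := by
  rw [bdf4_cross_eq]
  refine mul_nonneg hx ?_
  nlinarith [mul_nonneg (sub_nonneg.2 (cos_le_one x)) (sq_nonneg (cos x - 1 / 5)),
    sq_nonneg (cos x)]

/-- Key angle estimate in the proof of Lemma 4.2 (A-stability of BDF4). -/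
theorem stmt_13 (x : ℝ) (hx : x ∈ Set.Icc 0 Real.pi) :
    -(Real.pi / 2) ≤
      (x - Real.pi) / 2
        + Real.arctan (-(23 * Real.sin x - 13 * Real.sin (2 * x) + 3 * Real.sin (3 * x)) /
            (25 - 23 * Real.cos x + 13 * Real.cos (2 * x) - 3 * Real.cos (3 * x)))
        + Real.arctan ((1 / 2) * Real.sin x / (1 - (1 / 2) * Real.cos x)) := by
  obtain ⟨hx0, hxpi⟩ := hx
  have hp : 0 < 1 - 1 / 2 * cos x := by linarith [cos_le_one x]
  have hA : -(π / 2) < x / 2 + arctan (1 / 2 * sin x / (1 - 1 / 2 * cos x)) := by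
    linarith [neg_pi_div_two_lt_arctan (1 / 2 * sin x / (1 - 1 / 2 * cos x))]
  have hs : 0 ≤ sin (x / 2) := sin_nonneg_of_nonneg_of_le_pi (by linarith) (by linarith)
  have key := neg_add_arctan_div_le_arctan_div (bdf4Re_pos x) hp hA (bdf4_cross_nonneg hs)
  rw [bdf4Im, bdf4Re] at key
  linarith
end

section
/- For every x ∈ [0, π], one has (x − π)/2 + arctan( −(163 sin x − 137 sin(2x) + 63 sin(3x) − 12 sin(4x)) / (137 − 163 cos x + 137 cos(2x) − 63 cos(3x) + 12 cos(4x)) ) + 2 arctan( ((1/2) sin x) / (1 − (1/2) cos x) ) ≥ −π/2. -/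
/-!
With `t = tan (x / 2) = sin x / (1 + cos x)` the first summand is `arctan t - π / 2`, and the
double-angle formula turns the last one into a single `arctan v` with `v ≥ 0`. The claim becomes
`arctan t + arctan v + arctan w ≥ 0`, which holds for `t, v ≥ 0` as soon as
`Im ((1 + i t) (1 + i v) (1 + i w)) = t + v + w (1 - t v) ≥ 0`. In terms of `s = sin x` and
`c = cos x` this imaginary part is `s Q(c) / ((1 + c) (2 c² - 4 c + 3) D(c))` for two quartics
`Q` and `D` that are positive on all of `ℝ`.
-/

open Real

-- The hypothesis says `Im ((1 + a i) (1 + b i) (1 + w i)) ≥ 0`.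
theorem arctan_add_arctan_add_arctan_nonneg {a b w : ℝ} (ha : 0 ≤ a)
    (h : 0 ≤ a + b + w * (1 - a * b)) : 0 ≤ arctan a + arctan b + arctan w := by
  rcases lt_or_ge (a * b) 1 with hab | hab
  · have hw : -((a + b) / (1 - a * b)) ≤ w := by
      rw [← neg_div, div_le_iff₀ (by linarith)]
      linarith
    rw [arctan_add hab]
    linarith [arctan_strictMono.monotone hw, arctan_neg ((a + b) / (1 - a * b))]
  · -- here `arctan a + arctan b ≥ π / 2`
    have ha' : 0 < a := lt_of_le_of_ne ha (by rintro rfl; simp at hab; linarith)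
    have hb : a⁻¹ ≤ b := by rw [inv_le_iff_one_le_mul₀' ha']; linarith
    linarith [arctan_strictMono.monotone hb, arctan_inv_of_pos ha', neg_pi_div_two_lt_arctan w]

theorem arctan_sin_div_one_add_cos {x : ℝ} (h₁ : -π < x) (h₂ : x < π) :
    arctan (sin x / (1 + cos x)) = x / 2 := by
  have hcos : 0 < cos (x / 2) := cos_pos_of_mem_Ioo ⟨by linarith, by linarith⟩
  have htan : sin x / (1 + cos x) = tan (x / 2) := by
    conv_lhs => rw [← add_halves x, ← two_mul, sin_two_mul, cos_two_mul]
    rw [tan_eq_sin_div_cos]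
    field_simp
    ring
  rw [htan, arctan_tan (by linarith) (by linarith)]

theorem two_mul_arctan_half_sin_div (x : ℝ) :
    2 * arctan (1 / 2 * sin x / (1 - 1 / 2 * cos x))
      = arctan (2 * sin x * (2 - cos x) / (2 * cos x ^ 2 - 4 * cos x + 3)) := by
  have hc : 0 < 2 - cos x := by linarith [cos_le_one x]
  have hK : 0 < 2 * cos x ^ 2 - 4 * cos x + 3 := by nlinarith [sq_nonneg (cos x - 1)]
  have hu : 1 / 2 * sin x / (1 - 1 / 2 * cos x) = sin x / (2 - cos x) := by
    field_simp
  have hu2 : (sin x / (2 - cos x)) ^ 2 < 1 := by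
    rw [div_pow, div_lt_one (by positivity)]
    nlinarith [sin_sq_add_cos_sq x]
  rw [hu, two_mul_arctan (by nlinarith) (by nlinarith)]
  congr 1
  rw [div_pow, sin_sq]
  field_simp
  ring

theorem sin_combination_eq (x : ℝ) :
    163 * sin x - 137 * sin (2 * x) + 63 * sin (3 * x) - 12 * sin (4 * x)
      = sin x * (100 - 226 * cos x + 252 * cos x ^ 2 - 96 * cos x ^ 3) := by
  rw [show 4 * x = 2 * (2 * x) by ring, sin_two_mul (2 * x), sin_two_mul, cos_two_mul,
    sin_three_mul]
  linear_combination (-252 * sin x) * sin_sq_add_cos_sq x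

theorem cos_combination_eq (x : ℝ) :
    137 - 163 * cos x + 137 * cos (2 * x) - 63 * cos (3 * x) + 12 * cos (4 * x)
      = 96 * cos x ^ 4 - 252 * cos x ^ 3 + 178 * cos x ^ 2 + 26 * cos x + 12 := by
  rw [show 4 * x = 2 * (2 * x) by ring, cos_two_mul (2 * x), cos_two_mul, cos_three_mul]
  ring

theorem quartic_denominator_pos (c : ℝ) :
    0 < 96 * c ^ 4 - 252 * c ^ 3 + 178 * c ^ 2 + 26 * c + 12 := by
  nlinarith [sq_nonneg (c ^ 2 - 4 / 3 * c), sq_nonneg (c - 1), sq_nonneg c, sq_nonneg (c ^ 2 - c)]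

theorem quartic_combination_pos (c : ℝ) :
    0 < 768 * c ^ 4 - 2016 * c ^ 3 + 1472 * c ^ 2 - 168 * c + 184 := by
  nlinarith [sq_nonneg (c ^ 2 - 4 / 3 * c), sq_nonneg (c - 1), sq_nonneg c, sq_nonneg (c ^ 2 - c)]

-- `t`, `v`, `w` are the tangents of `x / 2`, of twice the argument of `1 / (1 - e^{ix} / 2)`,
-- and of the argument of the BDF5 factor, written in `s = sin x`, `c = cos x`.
theorem tangent_combination_nonneg {s c : ℝ} (hsc : s ^ 2 + c ^ 2 = 1) (hs : 0 ≤ s)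
    (hc : -1 < c) :
    let t := s / (1 + c)
    let v := 2 * s * (2 - c) / (2 * c ^ 2 - 4 * c + 3)
    let w := -(s * (100 - 226 * c + 252 * c ^ 2 - 96 * c ^ 3)) /
      (96 * c ^ 4 - 252 * c ^ 3 + 178 * c ^ 2 + 26 * c + 12)
    0 ≤ t + v + w * (1 - t * v) := by
  intro t v w
  have h1c : 0 < 1 + c := by linarith
  have hK : 0 < 2 * c ^ 2 - 4 * c + 3 := by nlinarith [sq_nonneg (c - 1)]
  have hD := quartic_denominator_pos c
  have hQ := quartic_combination_pos c
  have hprod : 1 - t * v = (2 * c - 1) / (2 * c ^ 2 - 4 * c + 3) := by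
    rw [div_mul_div_comm, one_sub_div (mul_pos h1c hK).ne',
      div_eq_div_iff (mul_pos h1c hK).ne' hK.ne']
    linear_combination (-2 * (2 - c) * (2 * c ^ 2 - 4 * c + 3)) * hsc
  have hsum : t + v = s * (7 - 2 * c) / ((1 + c) * (2 * c ^ 2 - 4 * c + 3)) := by
    rw [div_add_div _ _ h1c.ne' hK.ne']
    ring
  have hcomb : t + v + w * (1 - t * v)
      = s * (768 * c ^ 4 - 2016 * c ^ 3 + 1472 * c ^ 2 - 168 * c + 184) /
        ((1 + c) * (2 * c ^ 2 - 4 * c + 3)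
          * (96 * c ^ 4 - 252 * c ^ 3 + 178 * c ^ 2 + 26 * c + 12)) := by
    rw [hprod, hsum, div_mul_div_comm, div_add_div _ _ (mul_pos h1c hK).ne' (mul_pos hD hK).ne',
      div_eq_div_iff (by positivity) (by positivity)]
    ring
  rw [hcomb]
  positivity

/-- Key angle estimate in the proof of Lemma 4.3 (A-stability of BDF5). -/
theorem stmt_14 (x : ℝ) (hx : x ∈ Set.Icc 0 Real.pi) :
    -(Real.pi / 2) ≤
      (x - Real.pi) / 2
        + Real.arctan (-(163 * Real.sin x - 137 * Real.sin (2 * x) + 63 * Real.sin (3 * x)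
              - 12 * Real.sin (4 * x)) /
            (137 - 163 * Real.cos x + 137 * Real.cos (2 * x) - 63 * Real.cos (3 * x)
              + 12 * Real.cos (4 * x)))
        + 2 * Real.arctan ((1 / 2) * Real.sin x / (1 - (1 / 2) * Real.cos x)) := by
  obtain ⟨hx₀, hxπ⟩ := hx
  rw [sin_combination_eq, cos_combination_eq, two_mul_arctan_half_sin_div]
  rcases hxπ.eq_or_lt with rfl | hxπ
  · simpa using pi_div_two_pos.le
  have hs : 0 ≤ sin x := sin_nonneg_of_nonneg_of_le_pi hx₀ hxπ.le
  have hc : -1 < cos x := by simpa using cos_lt_cos_of_nonneg_of_le_pi hx₀ le_rfl hxπ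
  have hhalf := arctan_sin_div_one_add_cos (by linarith [pi_pos]) hxπ
  have hsum := arctan_add_arctan_add_arctan_nonneg (div_nonneg hs (by linarith))
    (tangent_combination_nonneg (sin_sq_add_cos_sq x) hs hc)
  linarith
end

section
/- For every real number x, one has arctan( (3 sin x) / (5 − 3 cos x) ) + arctan( (sin x) / (2 − cos x) ) + arctan( (sin x) / (3 − cos x) ) < π/2. -/
/-!
If `m² + b² ≤ a²`, then `m sin x + b cos x ≤ a` by Cauchy–Schwarz, so the quotient
`b sin x / (a - b cos x)` never exceeds `b / m`. With `(a, b) = (5, 3), (2, 1), (3, 1)` this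
bounds the three arguments of `arctan` by `3/4`, `29/50` and `9/25`, and three nonnegative
numbers `p, q, t` have `arctan p + arctan q + arctan t < π/2` as soon as `pq + qt + tp < 1`.
-/

open Real

theorem mul_sin_div_sub_mul_cos_le {a b m : ℝ} (x : ℝ) (ha : 0 < a) (hb : 0 ≤ b) (hm : 0 < m)
    (h : m ^ 2 + b ^ 2 ≤ a ^ 2) : b * sin x / (a - b * cos x) ≤ b / m := by
  have hcos := cos_le_one x
  have hpyth := sin_sq_add_cos_sq x
  have hba : b < a := by nlinarith
  have hden : 0 < a - b * cos x := by nlinarith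
  have hcs : m * sin x + b * cos x ≤ a := by
    have hsq : (m * sin x + b * cos x) ^ 2 ≤ a ^ 2 := by
      nlinarith [sq_nonneg (m * cos x - b * sin x)]
    exact abs_le_of_sq_le_sq' hsq ha.le |>.2
  rw [div_le_div_iff₀ hden hm]
  nlinarith

theorem arctan_add_arctan_add_arctan_lt_pi_div_two {p q t : ℝ} (hp : 0 ≤ p) (hq : 0 ≤ q)
    (ht : 0 ≤ t) (h : p * q + q * t + t * p < 1) :
    arctan p + arctan q + arctan t < π / 2 := by
  have hpq : p * q < 1 := by nlinarith [mul_nonneg hq ht, mul_nonneg ht hp]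
  rw [arctan_add hpq]
  apply arctan_add_arctan_lt_pi_div_two
  rw [div_mul_eq_mul_div, div_lt_one (by linarith)]
  linarith

/-- Strict upper bound on θ₃ + θ₄ + θ₅ in the proof of Lemma 4.4 (A-stability of BDF6). -/
theorem stmt_15 (x : ℝ) :
    Real.arctan (3 * Real.sin x / (5 - 3 * Real.cos x))
      + Real.arctan (Real.sin x / (2 - Real.cos x))
      + Real.arctan (Real.sin x / (3 - Real.cos x)) < Real.pi / 2 := by
  have h₃ : 3 * sin x / (5 - 3 * cos x) ≤ 3 / 4 :=
    mul_sin_div_sub_mul_cos_le x (by norm_num) (by norm_num) (by norm_num) (by norm_num)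
  have h₄ : sin x / (2 - cos x) ≤ 29 / 50 := by
    simpa using mul_sin_div_sub_mul_cos_le (a := 2) (b := 1) (m := 50 / 29) x
      (by norm_num) (by norm_num) (by norm_num) (by norm_num)
  have h₅ : sin x / (3 - cos x) ≤ 9 / 25 := by
    simpa using mul_sin_div_sub_mul_cos_le (a := 3) (b := 1) (m := 25 / 9) x
      (by norm_num) (by norm_num) (by norm_num) (by norm_num)
  calc _ ≤ arctan (3 / 4) + arctan (29 / 50) + arctan (9 / 25) := by
        gcongr
    _ < π / 2 :=
      arctan_add_arctan_add_arctan_lt_pi_div_two (by norm_num) (by norm_num) (by norm_num)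
        (by norm_num)
end

section
/- For every x ∈ [0, π], one has 23 sin x − 13 sin(2x) + 3 sin(3x) ≥ 0. -/
/-! Factoring out `sin x` turns the trigonometric polynomial into `2 sin x · q(cos x)` with
`q(t) = 6t² − 13t + 10`, whose discriminant `169 − 240` is negative; so the sign is that of
`sin x`, which is nonnegative on `[0, π]`. -/

open Real

theorem sin_combination_eq_two_mul_sin_mul (x : ℝ) :
    23 * sin x - 13 * sin (2 * x) + 3 * sin (3 * x)
      = 2 * sin x * (6 * cos x ^ 2 - 13 * cos x + 10) := by
  rw [sin_two_mul, sin_three_mul]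
  linear_combination (-12 * sin x) * sin_sq_add_cos_sq x

theorem six_mul_sq_sub_thirteen_mul_add_ten_pos (t : ℝ) : 0 < 6 * t ^ 2 - 13 * t + 10 := by
  nlinarith [sq_nonneg (t - 13 / 12)]

/-- Nonnegativity of b₄ on [0, π], used in the proof of Lemma 4.2 (BDF4). -/
theorem stmt_17 (x : ℝ) (hx : x ∈ Set.Icc 0 Real.pi) :
    0 ≤ 23 * Real.sin x - 13 * Real.sin (2 * x) + 3 * Real.sin (3 * x) := by
  rw [sin_combination_eq_two_mul_sin_mul]
  have hsin : 0 ≤ sin x := sin_nonneg_of_nonneg_of_le_pi hx.1 hx.2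
  exact mul_nonneg (by positivity) (six_mul_sq_sub_thirteen_mul_add_ten_pos (cos x)).le
end

section
/- For every x ∈ [0, π], one has 213 sin x − 237 sin(2x) + 163 sin(3x) − 62 sin(4x) + 10 sin(5x) ≥ 0. -/
/-!
Since `sin (k x) = sin x * U_{k-1} (cos x)` with `U` the Chebyshev polynomials of the second kind,
the trigonometric sum factors as `sin x * P (cos x)` for a quartic `P`. This quartic is a sum of
squares plus a positive constant, so it is positive on all of `ℝ`, and the sign of the sum is the
sign of `sin x`.
-/

open Real Polynomial Chebyshev

theorem Polynomial.Chebyshev.U_three (R : Type*) [CommRing R] : U R 3 = 8 * X ^ 3 - 4 * X := by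
  rw [U_eq]; norm_num [U_two]; ring

theorem Polynomial.Chebyshev.U_four (R : Type*) [CommRing R] :
    U R 4 = 16 * X ^ 4 - 12 * X ^ 2 + 1 := by
  rw [U_eq]; norm_num [U_two, U_three]; ring

theorem sin_natCast_add_one_mul (x : ℝ) (n : ℕ) :
    sin ((n + 1) * x) = sin x * (U ℝ n).eval (cos x) := by
  simpa [mul_comm] using (U_real_cos x n).symm

theorem sin_combination_eq_sin_mul_quartic (x : ℝ) :
    213 * sin x - 237 * sin (2 * x) + 163 * sin (3 * x) - 62 * sin (4 * x) + 10 * sin (5 * x)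
      = sin x * (160 * cos x ^ 4 - 496 * cos x ^ 3 + 532 * cos x ^ 2 - 226 * cos x + 60) := by
  have h2 := sin_natCast_add_one_mul x 1
  have h3 := sin_natCast_add_one_mul x 2
  have h4 := sin_natCast_add_one_mul x 3
  have h5 := sin_natCast_add_one_mul x 4
  norm_num [U_two, U_three, U_four] at h2 h3 h4 h5
  rw [h2, h3, h4, h5]
  ring

-- `160 c⁴ - 496 c³ + 532 c² - 226 c + 60 = 160 (c² - 31/20 c + 2/5)² + (98 c² - 138 c + 172) / 5`,
-- and the last quadratic has negative discriminant.
theorem quartic_pos (c : ℝ) : 0 < 160 * c ^ 4 - 496 * c ^ 3 + 532 * c ^ 2 - 226 * c + 60 := by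
  nlinarith [sq_nonneg (c ^ 2 - 31 / 20 * c + 2 / 5), sq_nonneg (c - 69 / 98)]

/-- Nonnegativity of b₆ on [0, π], used in the proof of Lemma 4.4 (BDF6). -/
theorem stmt_19 (x : ℝ) (hx : x ∈ Set.Icc 0 Real.pi) :
    0 ≤ 213 * Real.sin x - 237 * Real.sin (2 * x) + 163 * Real.sin (3 * x)
          - 62 * Real.sin (4 * x) + 10 * Real.sin (5 * x) := by
  rw [sin_combination_eq_sin_mul_quartic]
  exact mul_nonneg (sin_nonneg_of_mem_Icc hx) (quartic_pos _).le
end
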